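/- arXiv:1705.10010 — 2 statements merged into one kernel-verified Lean document; each statement's English description precedes it below -/
import Mathlib

section
/- Let N_1(X) = (1+|X|^{d+1})^{-1} on ℝ^d. Then N_1 ∈ L^1(ℝ^d), and there exists a constant C_0 > 1 such that C_0^{-1} N_1(X) ≤ (N_1 * N_1)(X) ≤ C_0 N_1(X) for all X ∈ ℝ^d, where * denotes convolution. -/
open MeasureTheory Module

/-! For `f x = (1 + ‖x‖ ^ p)⁻¹`, Peetre's inequality `f x * f y ≤ 2 ^ (p - 1) * f (x + y)` gives
`f (x - y) ≥ 2 ^ (1 - p) * f x * f y`; integrating against `f y` bounds the convolution `f ⋆ f`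
from below by `(∫ f²) / 2 ^ (p - 1) * f x`. For the upper bound, one of `y` and `x - y` has norm at
least `‖x‖ / 2`, so `f y * f (x - y) ≤ 2 ^ p * f x * (f y + f (x - y))`, whose integral is
`2 ^ (p + 1) * (∫ f) * f x`. Integrability for `p > dim E` follows by comparison with
`(1 + ‖x‖) ^ (-p)`. -/

lemma inv_le_mul_inv_iff {a b c : ℝ} (ha : 0 < a) (hb : 0 < b) : b⁻¹ ≤ c * a⁻¹ ↔ a ≤ c * b := by
  rw [le_mul_inv_iff₀ ha, inv_mul_le_iff₀ hb, mul_comm]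

lemma exists_one_lt_inv_mul_le_and_le_mul {α : Type*} {g h : α → ℝ} {a b : ℝ}
    (hg : ∀ x, 0 ≤ g x) (ha : 0 < a) (hlow : ∀ x, a * g x ≤ h x) (hup : ∀ x, h x ≤ b * g x) :
    ∃ C > 1, ∀ x, C⁻¹ * g x ≤ h x ∧ h x ≤ C * g x := by
  set C := max 2 (max a⁻¹ b)
  have hCa : C⁻¹ ≤ a := inv_le_of_inv_le₀ ha (le_max_of_le_right (le_max_left _ _))
  refine ⟨C, one_lt_two.trans_le (le_max_left _ _), fun x => ⟨?_, ?_⟩⟩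
  · exact (mul_le_mul_of_nonneg_right hCa (hg x)).trans (hlow x)
  · exact (hup x).trans (mul_le_mul_of_nonneg_right (le_max_of_le_right (le_max_right _ _)) (hg x))

noncomputable def powerKernel {E : Type*} [Norm E] (p : ℕ) (x : E) : ℝ := (1 + ‖x‖ ^ p)⁻¹

section Pointwise

variable {E : Type*} [SeminormedAddCommGroup E] (p : ℕ)

lemma powerKernel_pos (x : E) : 0 < powerKernel p x := by
  unfold powerKernel; positivity

lemma powerKernel_le_one (x : E) : powerKernel p x ≤ 1 :=
  inv_le_one_of_one_le₀ (le_add_of_nonneg_right (by positivity))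

lemma continuous_powerKernel : Continuous (powerKernel p : E → ℝ) :=
  Continuous.inv₀ (by fun_prop) fun x => (add_pos_of_pos_of_nonneg one_pos (by positivity)).ne'

@[simp]
lemma powerKernel_neg (x : E) : powerKernel p (-x) = powerKernel p x := by
  simp only [powerKernel, norm_neg]

lemma powerKernel_le_mul_iff {x y : E} {c : ℝ} :
    powerKernel p y ≤ c * powerKernel p x ↔ 1 + ‖x‖ ^ p ≤ c * (1 + ‖y‖ ^ p) :=
  inv_le_mul_inv_iff (by positivity) (by positivity)

lemma powerKernel_le_two_pow_mul_of_norm_le {x y : E} (h : ‖x‖ ≤ 2 * ‖y‖) :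
    powerKernel p y ≤ 2 ^ p * powerKernel p x := by
  rw [powerKernel_le_mul_iff]
  have h2 : (1 : ℝ) ≤ 2 ^ p := one_le_pow₀ one_le_two
  calc 1 + ‖x‖ ^ p ≤ 1 + 2 ^ p * ‖y‖ ^ p := by
        rw [← mul_pow]; gcongr
    _ ≤ 2 ^ p * (1 + ‖y‖ ^ p) := by linarith

lemma powerKernel_mul_le (x y : E) :
    powerKernel p x * powerKernel p y ≤ 2 ^ (p - 1) * powerKernel p (x + y) := by
  rw [powerKernel, powerKernel, ← mul_inv, powerKernel, inv_le_mul_inv_iff (by positivity)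
    (by positivity)]
  have h2 : (1 : ℝ) ≤ 2 ^ (p - 1) := one_le_pow₀ one_le_two
  have hx : 0 ≤ ‖x‖ ^ p := by positivity
  have hy : 0 ≤ ‖y‖ ^ p := by positivity
  calc 1 + ‖x + y‖ ^ p ≤ 1 + 2 ^ (p - 1) * (‖x‖ ^ p + ‖y‖ ^ p) := by
        gcongr
        exact (pow_le_pow_left₀ (norm_nonneg _) (norm_add_le x y) p).trans
          (add_pow_le (norm_nonneg x) (norm_nonneg y) p)
    _ ≤ 2 ^ (p - 1) * ((1 + ‖x‖ ^ p) * (1 + ‖y‖ ^ p)) := by nlinarith [mul_nonneg hx hy]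

lemma powerKernel_mul_powerKernel_sub_le (x y : E) :
    powerKernel p y * powerKernel p (x - y) ≤
      2 ^ p * powerKernel p x * (powerKernel p y + powerKernel p (x - y)) := by
  have hy := powerKernel_pos p y
  have hxy := powerKernel_pos p (x - y)
  have htri : ‖x‖ ≤ ‖y‖ + ‖x - y‖ := norm_le_norm_add_norm_sub' x y
  rcases le_total ‖y‖ ‖x - y‖ with h | h
  · have := powerKernel_le_two_pow_mul_of_norm_le p (x := x) (y := x - y) (by linarith)
    nlinarith
  · have := powerKernel_le_two_pow_mul_of_norm_le p (x := x) (y := y) (by linarith)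
    nlinarith

end Pointwise

theorem integrable_powerKernel {E : Type*} [NormedAddCommGroup E] [NormedSpace ℝ E]
    [FiniteDimensional ℝ E] [MeasurableSpace E] [BorelSpace E] (μ : Measure E)
    [μ.IsAddHaarMeasure] {p : ℕ} (hp : finrank ℝ E < p) : Integrable (powerKernel p) μ := by
  refine ((integrable_one_add_norm (μ := μ) (r := p) (by exact_mod_cast hp)).const_mul
    (2 ^ (p - 1))).mono' ?_ (.of_forall fun x => ?_)
  · exact (continuous_powerKernel p).aestronglyMeasurable
  rw [Real.norm_of_nonneg (powerKernel_pos p x).le, Real.rpow_neg (by positivity),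
    Real.rpow_natCast, powerKernel, inv_le_mul_inv_iff (by positivity) (by positivity)]
  simpa using add_pow_le zero_le_one (norm_nonneg x) p

section Convolution

variable {E : Type*} [SeminormedAddCommGroup E] [MeasurableSpace E] [MeasurableAdd E]
  [MeasurableNeg E] {μ : Measure E} [μ.IsAddLeftInvariant] [μ.IsNegInvariant] {p : ℕ}

lemma integrable_powerKernel_mul_comp_sub (hf : Integrable (powerKernel p) μ) (x : E) :
    Integrable (fun y => powerKernel p y * powerKernel p (x - y)) μ :=
  (hf.comp_sub_left x).bdd_mul hf.aestronglyMeasurable (c := 1) <| .of_forall fun y => by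
    rw [Real.norm_of_nonneg (powerKernel_pos p y).le]; exact powerKernel_le_one p y

lemma integrable_powerKernel_sq (hf : Integrable (powerKernel p) μ) :
    Integrable (fun y => powerKernel p y ^ 2) μ := by
  simpa [sq] using integrable_powerKernel_mul_comp_sub hf 0

lemma integral_powerKernel_mul_sub_le (hf : Integrable (powerKernel p) μ) (x : E) :
    ∫ y, powerKernel p y * powerKernel p (x - y) ∂μ ≤
      (2 ^ (p + 1) * ∫ y, powerKernel p y ∂μ) * powerKernel p x := by
  calc ∫ y, powerKernel p y * powerKernel p (x - y) ∂μ
      ≤ ∫ y, 2 ^ p * powerKernel p x * (powerKernel p y + powerKernel p (x - y)) ∂μ :=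
        integral_mono (integrable_powerKernel_mul_comp_sub hf x)
          ((hf.add (hf.comp_sub_left x)).const_mul _) (powerKernel_mul_powerKernel_sub_le p x)
    _ = (2 ^ (p + 1) * ∫ y, powerKernel p y ∂μ) * powerKernel p x := by
        rw [integral_const_mul, integral_add hf (hf.comp_sub_left x),
          integral_sub_left_eq_self]
        ring

lemma le_integral_powerKernel_mul_sub (hf : Integrable (powerKernel p) μ) (x : E) :
    (∫ y, powerKernel p y ^ 2 ∂μ) / 2 ^ (p - 1) * powerKernel p x ≤
      ∫ y, powerKernel p y * powerKernel p (x - y) ∂μ := by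
  rw [div_mul_eq_mul_div, div_le_iff₀ (by positivity), mul_comm _ (2 ^ (p - 1)),
    ← integral_mul_const, ← integral_const_mul]
  refine integral_mono ((integrable_powerKernel_sq hf).mul_const _)
    ((integrable_powerKernel_mul_comp_sub hf x).const_mul _) fun y => ?_
  calc powerKernel p y ^ 2 * powerKernel p x
      = powerKernel p y * (powerKernel p x * powerKernel p (-y)) := by rw [powerKernel_neg]; ring
    _ ≤ powerKernel p y * (2 ^ (p - 1) * powerKernel p (x + -y)) :=
        mul_le_mul_of_nonneg_left (powerKernel_mul_le p x (-y)) (powerKernel_pos p y).le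
    _ = 2 ^ (p - 1) * (powerKernel p y * powerKernel p (x - y)) := by rw [← sub_eq_add_neg]; ring

lemma integral_powerKernel_sq_pos [NeZero μ] (hf : Integrable (powerKernel p) μ) :
    0 < ∫ y, powerKernel p y ^ 2 ∂μ := by
  rw [integral_pos_iff_support_of_nonneg (fun y => sq_nonneg _) (integrable_powerKernel_sq hf),
    Function.support_eq_univ fun y => (pow_pos (powerKernel_pos p y) 2).ne']
  exact Measure.measure_univ_pos.mpr (NeZero.ne μ)

end Convolution

theorem stmt2_general (d : ℕ)
    (N1 : EuclideanSpace ℝ (Fin d) → ℝ)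
    (hN1 : ∀ X, N1 X = (1 + ‖X‖ ^ (d + 1))⁻¹) :
    Integrable N1 (volume : Measure (EuclideanSpace ℝ (Fin d))) ∧
    ∃ C0 > 1, ∀ X : EuclideanSpace ℝ (Fin d),
      C0⁻¹ * N1 X ≤ (∫ Y, N1 Y * N1 (X - Y)) ∧
      (∫ Y, N1 Y * N1 (X - Y)) ≤ C0 * N1 X := by
  obtain rfl : N1 = powerKernel (d + 1) := funext hN1
  have hint : Integrable (powerKernel (d + 1)) (volume : Measure (EuclideanSpace ℝ (Fin d))) :=
    integrable_powerKernel _ (by simp)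
  exact ⟨hint, exists_one_lt_inv_mul_le_and_le_mul (fun x => (powerKernel_pos _ x).le)
    (div_pos (integral_powerKernel_sq_pos hint) (by positivity))
    (le_integral_powerKernel_mul_sub hint) (integral_powerKernel_mul_sub_le hint)⟩

theorem stmt2 (d : ℕ) (hd : 1 ≤ d)
    (N1 : EuclideanSpace ℝ (Fin d) → ℝ)
    (hN1 : ∀ X, N1 X = (1 + ‖X‖ ^ (d + 1))⁻¹) :
    Integrable N1 (volume : Measure (EuclideanSpace ℝ (Fin d))) ∧
    ∃ C0 > 1, ∀ X : EuclideanSpace ℝ (Fin d),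
      C0⁻¹ * N1 X ≤ (∫ Y, N1 Y * N1 (X - Y)) ∧
      (∫ Y, N1 Y * N1 (X - Y)) ≤ C0 * N1 X :=
  stmt2_general d N1 hN1
end

section
/- If θ : ℝ → [0,1] is smooth with θ(r)=1 for |r|≤1, θ(r)=0 for |r|≥2, and |θ'(r)|² ≤ C θ(r) for all r, and if u ∈ H¹_loc(ℝ^d), then the function ρ(X)² = ∫_{ℝ^d} |u(Y)|² θ(|X−Y|) dY satisfies, with ρ^{(ε)} = (ρ² + ε)^{1/2} for ε > 0: |∇ρ^{(ε)}(X)|² ≤ ∫_{ℝ^d} |∇u(Y)|² θ(|X−Y|) dY for all X ∈ ℝ^d (where the gradient of ρ² is computed by differentiating under the integral sign, using smoothness of θ). -/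
open MeasureTheory

lemma cs_integral {α : Type*} [MeasurableSpace α] {μ : Measure α} {f g : α → ℝ}
    (hf2 : Integrable (fun a => f a ^ 2) μ) (hg2 : Integrable (fun a => g a ^ 2) μ)
    (hfg : Integrable (fun a => f a * g a) μ) :
    (∫ a, f a * g a ∂μ) ^ 2 ≤ (∫ a, f a ^ 2 ∂μ) * (∫ a, g a ^ 2 ∂μ) := by
  set A := ∫ a, f a ^ 2 ∂μ
  set B := ∫ a, f a * g a ∂μ
  set Cc := ∫ a, g a ^ 2 ∂μ
  have hA : 0 ≤ A := integral_nonneg fun a => sq_nonneg _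
  have hC : 0 ≤ Cc := integral_nonneg fun a => sq_nonneg _
  rcases eq_or_lt_of_le hC with hC0 | hCpos
  · have hg0 : (fun a => g a ^ 2) =ᵐ[μ] 0 := by
      rw [← integral_eq_zero_iff_of_nonneg (fun a => sq_nonneg _) hg2]
      exact hC0.symm
    have hB : B = 0 := by
      apply integral_eq_zero_of_ae
      filter_upwards [hg0] with a ha
      have : g a = 0 := by
        have := ha
        simp only [Pi.zero_apply] at this
        nlinarith [sq_nonneg (g a)]
      simp [this]
    simp [hB]
    positivity
  · have key : 0 ≤ ∫ a, (Cc * f a - B * g a) ^ 2 ∂μ := integral_nonneg fun a => sq_nonneg _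
    have expand : ∫ a, (Cc * f a - B * g a) ^ 2 ∂μ
        = Cc ^ 2 * A - 2 * Cc * B * B + B ^ 2 * Cc := by
      have : (fun a => (Cc * f a - B * g a) ^ 2)
          = fun a => Cc ^ 2 * (f a ^ 2) - (2 * Cc * B) * (f a * g a) + B ^ 2 * (g a ^ 2) := by
        funext a; ring
      rw [this, integral_add, integral_sub]
      · rw [integral_const_mul, integral_const_mul, integral_const_mul]
      · exact hf2.const_mul _
      · exact hfg.const_mul _
      · exact (hf2.const_mul _).sub (hfg.const_mul _)
      · exact hg2.const_mul _
    nlinarith [key, expand, hCpos]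

lemma k_smooth {d : ℕ} {θ : ℝ → ℝ} (hθ : ContDiff ℝ (⊤ : ℕ∞) θ)
    (hθ1 : ∀ r : ℝ, |r| ≤ 1 → θ r = 1) :
    ContDiff ℝ (⊤ : ℕ∞) (fun Z : EuclideanSpace ℝ (Fin d) => θ ‖Z‖) := by
  rw [contDiff_iff_contDiffAt]
  intro Z
  rcases lt_or_ge ‖Z‖ 1 with h | h
  · apply ContDiffAt.congr_of_eventuallyEq (contDiffAt_const (c := (1 : ℝ)))
    have hmem : {W : EuclideanSpace ℝ (Fin d) | ‖W‖ < 1} ∈ nhds Z :=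
      (isOpen_lt continuous_norm continuous_const).mem_nhds h
    filter_upwards [hmem] with W hW
    exact hθ1 ‖W‖ (by rw [abs_of_nonneg (norm_nonneg _)]; exact le_of_lt hW)
  · have hZ : Z ≠ 0 := by
      intro h0; rw [h0, norm_zero] at h; linarith
    exact hθ.contDiffAt.comp Z (contDiffAt_norm (𝕜 := ℝ) hZ)

lemma k_fderiv_zero {d : ℕ} {θ : ℝ → ℝ}
    (hθ0 : ∀ r : ℝ, 2 ≤ |r| → θ r = 0) (Z : EuclideanSpace ℝ (Fin d)) (hZ : 2 < ‖Z‖) :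
    fderiv ℝ (fun W : EuclideanSpace ℝ (Fin d) => θ ‖W‖) Z = 0 := by
  have : (fun W : EuclideanSpace ℝ (Fin d) => θ ‖W‖) =ᶠ[nhds Z] fun _ => (0 : ℝ) := by
    have hmem : {W : EuclideanSpace ℝ (Fin d) | 2 < ‖W‖} ∈ nhds Z :=
      (isOpen_lt continuous_const continuous_norm).mem_nhds hZ
    filter_upwards [hmem] with W hW
    exact hθ0 ‖W‖ (by rw [abs_of_nonneg (norm_nonneg _)]; exact le_of_lt hW)
  rw [this.fderiv_eq, fderiv_fun_const]
  rfl

set_option maxHeartbeats 1000000 in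
theorem stmt17 (d : ℕ) (hd : 1 ≤ d) (C : ℝ) (θ : ℝ → ℝ)
    (hθ : ContDiff ℝ (⊤ : ℕ∞) θ) (h01 : ∀ r, θ r ∈ Set.Icc (0 : ℝ) 1)
    (hθ1 : ∀ r : ℝ, |r| ≤ 1 → θ r = 1) (hθ0 : ∀ r : ℝ, 2 ≤ |r| → θ r = 0)
    (hθ' : ∀ r, (deriv θ r) ^ 2 ≤ C * θ r)
    (u : EuclideanSpace ℝ (Fin d) → ℝ)
    (hu : Differentiable ℝ u)
    (hu2 : LocallyIntegrable (fun Y => (u Y) ^ 2)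
      (volume : Measure (EuclideanSpace ℝ (Fin d))))
    (hdu2 : LocallyIntegrable (fun Y => ‖fderiv ℝ u Y‖ ^ 2)
      (volume : Measure (EuclideanSpace ℝ (Fin d))))
    (ε : ℝ) (hε : 0 < ε)
    (ρε : EuclideanSpace ℝ (Fin d) → ℝ)
    (hρε : ∀ X, ρε X = Real.sqrt ((∫ Y, (u Y) ^ 2 * θ ‖X - Y‖) + ε)) :
    ∀ X, ∃ D : EuclideanSpace ℝ (Fin d) →L[ℝ] ℝ,
      HasFDerivAt ρε D X ∧ ‖D‖ ^ 2 ≤ ∫ Y, ‖fderiv ℝ u Y‖ ^ 2 * θ ‖X - Y‖ := by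
  classical
  intro X
  have hθnn : ∀ r : ℝ, 0 ≤ θ r := fun r => (h01 r).1
  have hθle1 : ∀ r : ℝ, θ r ≤ 1 := fun r => (h01 r).2
  have hknorm0 : ∀ Z : EuclideanSpace ℝ (Fin d), 2 ≤ ‖Z‖ → θ ‖Z‖ = 0 := fun Z hZ =>
    hθ0 _ (by rwa [abs_of_nonneg (norm_nonneg _)])
  have hk : ContDiff ℝ (⊤ : ℕ∞) (fun Z : EuclideanSpace ℝ (Fin d) => θ ‖Z‖) := k_smooth hθ hθ1
  have hk' : Continuous (fderiv ℝ (fun Z : EuclideanSpace ℝ (Fin d) => θ ‖Z‖)) :=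
    hk.continuous_fderiv (by simp)
  -- bound on fderiv of the cutoff
  have hksupp : HasCompactSupport (fderiv ℝ (fun Z : EuclideanSpace ℝ (Fin d) => θ ‖Z‖)) := by
    apply HasCompactSupport.fderiv
    apply HasCompactSupport.intro (isCompact_closedBall (0 : EuclideanSpace ℝ (Fin d)) 2)
    intro Z hZ
    apply hknorm0
    have := hZ
    simp only [Metric.mem_closedBall, not_le, dist_zero_right] at this
    exact this.le
  obtain ⟨M, hM⟩ := hksupp.exists_bound_of_continuous hk'
  set M' : ℝ := max M 0 with hM'def
  have hM'0 : 0 ≤ M' := le_max_right _ _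
  have hM' : ∀ Z, ‖fderiv ℝ (fun W : EuclideanSpace ℝ (Fin d) => θ ‖W‖) Z‖ ≤ M' :=
    fun Z => (hM Z).trans (le_max_left _ _)
  -- integrability helper
  have hθcont : Continuous fun Y : EuclideanSpace ℝ (Fin d) => θ ‖X - Y‖ :=
    hθ.continuous.comp ((continuous_const.sub continuous_id).norm)
  have int_aux : ∀ v : EuclideanSpace ℝ (Fin d) → ℝ, LocallyIntegrable v volume →
      (∀ Y, 0 ≤ v Y) → AEStronglyMeasurable v volume →
      ∀ x : EuclideanSpace ℝ (Fin d), Integrable (fun Y => v Y * θ ‖x - Y‖) volume := by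
    intro v hv hv0 hvm x
    have hind : Integrable ((Metric.closedBall x 2).indicator v) volume :=
      (hv.integrableOn_isCompact (isCompact_closedBall x 2)).integrable_indicator
        measurableSet_closedBall
    apply Integrable.mono' hind
    · exact hvm.mul
        (hθ.continuous.comp ((continuous_const.sub continuous_id).norm)).aestronglyMeasurable
    · filter_upwards with Y
      by_cases hY : Y ∈ Metric.closedBall x 2
      · rw [Set.indicator_of_mem hY, Real.norm_eq_abs,
          abs_of_nonneg (mul_nonneg (hv0 Y) (hθnn _))]
        exact mul_le_of_le_one_right (hv0 Y) (hθle1 _)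
      · rw [Set.indicator_of_notMem hY]
        have h3 : (2 : ℝ) < ‖x - Y‖ := by
          have := hY
          simp only [Metric.mem_closedBall, not_le, dist_eq_norm] at this
          rwa [norm_sub_rev]
        rw [hknorm0 _ h3.le, mul_zero]
        simp
  have humeas : AEStronglyMeasurable (fun Y => u Y ^ 2) (volume : Measure (EuclideanSpace ℝ (Fin d))) :=
    (hu.continuous.pow 2).aestronglyMeasurable
  have hdumeas : AEStronglyMeasurable (fun Y => ‖fderiv ℝ u Y‖ ^ 2)
      (volume : Measure (EuclideanSpace ℝ (Fin d))) :=
    (((measurable_fderiv ℝ u).norm).pow_const 2).aestronglyMeasurable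
  have hIu : ∀ x, Integrable (fun Y => u Y ^ 2 * θ ‖x - Y‖) volume :=
    int_aux _ hu2 (fun Y => sq_nonneg _) humeas
  have hIdu : ∀ x, Integrable (fun Y => ‖fderiv ℝ u Y‖ ^ 2 * θ ‖x - Y‖) volume :=
    int_aux _ hdu2 (fun Y => sq_nonneg _) hdumeas
  -- mixed integrability
  have hImix : ∀ x w : EuclideanSpace ℝ (Fin d),
      Integrable (fun Y => (u Y * fderiv ℝ u Y w) * θ ‖x - Y‖) volume := by
    intro x w
    have h1 := hIu x
    have h2 := hIdu x
    apply Integrable.mono' ((h1.add h2).const_mul ((1 + ‖w‖ ^ 2) / 2))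
    · exact ((hu.continuous.aestronglyMeasurable.mul
        (measurable_fderiv_apply_const ℝ u w).aestronglyMeasurable).mul
        ((hθ.continuous.comp ((continuous_const.sub continuous_id).norm)).aestronglyMeasurable))
    · filter_upwards with Y
      have h3 : |fderiv ℝ u Y w| ≤ ‖fderiv ℝ u Y‖ * ‖w‖ := by
        have := (fderiv ℝ u Y).le_opNorm w
        rwa [Real.norm_eq_abs] at this
      have hb : |u Y * fderiv ℝ u Y w| ≤ (1 + ‖w‖ ^ 2) / 2 * (u Y ^ 2 + ‖fderiv ℝ u Y‖ ^ 2) := by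
        rw [abs_mul]
        nlinarith [sq_nonneg (|u Y| - ‖fderiv ℝ u Y‖ * ‖w‖), abs_nonneg (u Y),
          abs_nonneg (fderiv ℝ u Y w), norm_nonneg (fderiv ℝ u Y), norm_nonneg w,
          sq_abs (u Y), sq_nonneg (‖fderiv ℝ u Y‖ * (1 - ‖w‖)),
          mul_nonneg (norm_nonneg (fderiv ℝ u Y)) (norm_nonneg w)]
      rw [Real.norm_eq_abs, abs_mul, abs_of_nonneg (hθnn _)]
      calc |u Y * fderiv ℝ u Y w| * θ ‖x - Y‖
          ≤ (1 + ‖w‖ ^ 2) / 2 * (u Y ^ 2 + ‖fderiv ℝ u Y‖ ^ 2) * θ ‖x - Y‖ :=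
            mul_le_mul_of_nonneg_right hb (hθnn _)
        _ = (1 + ‖w‖ ^ 2) / 2 * (u Y ^ 2 * θ ‖x - Y‖ + ‖fderiv ℝ u Y‖ ^ 2 * θ ‖x - Y‖) := by ring
  -- bound for differentiation under the integral
  set bnd : EuclideanSpace ℝ (Fin d) → ℝ :=
    (Metric.closedBall X 3).indicator (fun Y => M' * u Y ^ 2) with hbnd_def
  have hbnd_int : Integrable bnd volume := by
    rw [hbnd_def]
    exact IntegrableOn.integrable_indicator
      (Integrable.const_mul (hu2.integrableOn_isCompact (isCompact_closedBall X 3)) M')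
      measurableSet_closedBall
  have hbound : ∀ Y : EuclideanSpace ℝ (Fin d), ∀ x ∈ Metric.ball X 1,
      ‖u Y ^ 2 • fderiv ℝ (fun Z : EuclideanSpace ℝ (Fin d) => θ ‖Z‖) (x - Y)‖ ≤ bnd Y := by
    intro Y x hx
    by_cases hY : Y ∈ Metric.closedBall X 3
    · rw [hbnd_def, Set.indicator_of_mem hY, norm_smul, Real.norm_eq_abs,
        abs_of_nonneg (sq_nonneg (u Y))]
      calc u Y ^ 2 * ‖fderiv ℝ (fun Z : EuclideanSpace ℝ (Fin d) => θ ‖Z‖) (x - Y)‖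
          ≤ u Y ^ 2 * M' := mul_le_mul_of_nonneg_left (hM' _) (sq_nonneg _)
        _ = M' * u Y ^ 2 := mul_comm _ _
    · rw [hbnd_def, Set.indicator_of_notMem hY]
      have h2 : (2 : ℝ) < ‖x - Y‖ := by
        have h3 : (3 : ℝ) < dist Y X := by
          have := hY
          simpa only [Metric.mem_closedBall, not_le] using this
        have h4 : dist x X < 1 := by simpa [Metric.mem_ball] using hx
        have h5 := dist_triangle Y x X
        have h6 : (2 : ℝ) < dist Y x := by linarith
        rw [dist_comm, dist_eq_norm] at h6
        exact h6
      rw [k_fderiv_zero hθ0 _ h2]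
      simp
  -- the derivative of the squared integral
  set D1 : EuclideanSpace ℝ (Fin d) →L[ℝ] ℝ :=
    ∫ Y, u Y ^ 2 • fderiv ℝ (fun Z : EuclideanSpace ℝ (Fin d) => θ ‖Z‖) (X - Y) with hD1def
  have hF'meas : AEStronglyMeasurable
      (fun Y => u Y ^ 2 • fderiv ℝ (fun Z : EuclideanSpace ℝ (Fin d) => θ ‖Z‖) (X - Y))
      (volume : Measure (EuclideanSpace ℝ (Fin d))) :=
    ((hu.continuous.pow 2).smul (hk'.comp (continuous_const.sub continuous_id))).aestronglyMeasurable
  have hdiff_all : ∀ Y : EuclideanSpace ℝ (Fin d), ∀ x : EuclideanSpace ℝ (Fin d),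
      HasFDerivAt (fun x' => u Y ^ 2 * θ ‖x' - Y‖)
        (u Y ^ 2 • fderiv ℝ (fun Z : EuclideanSpace ℝ (Fin d) => θ ‖Z‖) (x - Y)) x := by
    intro Y x
    have h1 : HasFDerivAt (fun Z : EuclideanSpace ℝ (Fin d) => θ ‖Z‖)
        (fderiv ℝ (fun Z : EuclideanSpace ℝ (Fin d) => θ ‖Z‖) (x - Y)) (x - Y) :=
      (hk.differentiable (by simp) (x - Y)).hasFDerivAt
    have h2 : HasFDerivAt (fun x' : EuclideanSpace ℝ (Fin d) => x' - Y)
        (ContinuousLinearMap.id ℝ (EuclideanSpace ℝ (Fin d))) x := (hasFDerivAt_id x).sub_const Y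
    have h3 := h1.comp x h2
    rw [ContinuousLinearMap.comp_id] at h3
    exact h3.const_mul (u Y ^ 2)
  have hG : HasFDerivAt (fun x => ∫ Y, u Y ^ 2 * θ ‖x - Y‖) D1 X := by
    rw [hD1def]
    apply hasFDerivAt_integral_of_dominated_of_fderiv_le (bound := bnd)
      (F' := fun x Y => u Y ^ 2 • fderiv ℝ (fun Z : EuclideanSpace ℝ (Fin d) => θ ‖Z‖) (x - Y))
      (Metric.ball_mem_nhds X one_pos)
    · filter_upwards with x
      exact (hIu x).aestronglyMeasurable
    · exact hIu X
    · exact hF'meas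
    · filter_upwards with Y
      exact fun x hx => hbound Y x hx
    · exact hbnd_int
    · filter_upwards with Y
      exact fun x _ => hdiff_all Y x
  have hF'int : Integrable
      (fun Y => u Y ^ 2 • fderiv ℝ (fun Z : EuclideanSpace ℝ (Fin d) => θ ‖Z‖) (X - Y)) volume := by
    apply Integrable.mono' hbnd_int hF'meas
    filter_upwards with Y
    exact hbound Y X (Metric.mem_ball_self one_pos)
  have hD1apply : ∀ w : EuclideanSpace ℝ (Fin d),
      D1 w = ∫ Y, u Y ^ 2 * fderiv ℝ (fun Z : EuclideanSpace ℝ (Fin d) => θ ‖Z‖) (X - Y) w := by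
    intro w
    rw [hD1def, ContinuousLinearMap.integral_apply hF'int]
    simp [smul_eq_mul]
  -- integration by parts
  have key : ∀ w : EuclideanSpace ℝ (Fin d),
      D1 w = ∫ Y, 2 * (u Y * fderiv ℝ u Y w) * θ ‖X - Y‖ := by
    intro w
    have wdiff : Differentiable ℝ (fun Y : EuclideanSpace ℝ (Fin d) => θ ‖X - Y‖) :=
      (hk.differentiable (by simp)).comp ((differentiable_const X).sub differentiable_id)
    have hwf : ∀ Y : EuclideanSpace ℝ (Fin d), ∀ w' : EuclideanSpace ℝ (Fin d),
        fderiv ℝ (fun Y : EuclideanSpace ℝ (Fin d) => θ ‖X - Y‖) Y w'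
          = -(fderiv ℝ (fun Z : EuclideanSpace ℝ (Fin d) => θ ‖Z‖) (X - Y) w') := by
      intro Y w'
      have h1 : HasFDerivAt (fun Z : EuclideanSpace ℝ (Fin d) => θ ‖Z‖)
          (fderiv ℝ (fun Z : EuclideanSpace ℝ (Fin d) => θ ‖Z‖) (X - Y)) (X - Y) :=
        (hk.differentiable (by simp) _).hasFDerivAt
      have h2 : HasFDerivAt (fun Y' : EuclideanSpace ℝ (Fin d) => X - Y')
          (-(ContinuousLinearMap.id ℝ (EuclideanSpace ℝ (Fin d)))) Y := by
        simpa using (hasFDerivAt_id Y).const_sub X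
      have h3 := h1.comp Y h2
      have h4 : HasFDerivAt (fun Y : EuclideanSpace ℝ (Fin d) => θ ‖X - Y‖)
          ((fderiv ℝ (fun Z : EuclideanSpace ℝ (Fin d) => θ ‖Z‖) (X - Y)).comp
            (-(ContinuousLinearMap.id ℝ (EuclideanSpace ℝ (Fin d))))) Y := h3
      rw [h4.fderiv]
      simp
    have hu2d : ∀ Y, fderiv ℝ (fun Y => u Y ^ 2) Y w = 2 * (u Y * fderiv ℝ u Y w) := by
      intro Y
      have h1 : HasFDerivAt (fun Y => u Y * u Y)
          (u Y • fderiv ℝ u Y + u Y • fderiv ℝ u Y) Y := ((hu Y).hasFDerivAt).mul ((hu Y).hasFDerivAt)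
      have h2 : fderiv ℝ (fun Y => u Y ^ 2) Y = u Y • fderiv ℝ u Y + u Y • fderiv ℝ u Y := by
        have he : (fun Y => u Y ^ 2) = fun Y => u Y * u Y := by funext Y; ring
        rw [he, h1.fderiv]
      rw [h2]
      simp [smul_eq_mul]
      ring
    have hIk : Integrable
        (fun Y => u Y ^ 2 * fderiv ℝ (fun Z : EuclideanSpace ℝ (Fin d) => θ ‖Z‖) (X - Y) w)
        volume := by
      have h5 := (ContinuousLinearMap.apply ℝ ℝ w).integrable_comp hF'int
      apply h5.congr
      filter_upwards with Y
      simp [smul_eq_mul]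
    have int1 : Integrable
        (fun Y => fderiv ℝ (fun Y => u Y ^ 2) Y w * θ ‖X - Y‖) volume := by
      apply ((hImix X w).const_mul 2).congr
      filter_upwards with Y
      rw [hu2d]
      ring
    have int2 : Integrable
        (fun Y => u Y ^ 2 * fderiv ℝ (fun Y : EuclideanSpace ℝ (Fin d) => θ ‖X - Y‖) Y w)
        volume := by
      apply hIk.neg.congr
      filter_upwards with Y
      simp only [Pi.neg_apply]
      rw [hwf]
      ring
    have ibp := integral_mul_fderiv_eq_neg_fderiv_mul_of_integrable
      (μ := (volume : Measure (EuclideanSpace ℝ (Fin d))))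
      (f := fun Y => u Y ^ 2) (g := fun Y : EuclideanSpace ℝ (Fin d) => θ ‖X - Y‖) (v := w)
      int1 int2 (hIu X) (fun x _ => (hu.pow 2) x) (fun x _ => wdiff x)
    rw [hD1apply w]
    have e1 : (fun Y => u Y ^ 2 * fderiv ℝ (fun Z : EuclideanSpace ℝ (Fin d) => θ ‖Z‖) (X - Y) w)
        = fun Y => -(u Y ^ 2 * fderiv ℝ (fun Y : EuclideanSpace ℝ (Fin d) => θ ‖X - Y‖) Y w) := by
      funext Y
      rw [hwf]
      ring
    rw [e1, integral_neg, ibp, neg_neg]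
    congr 1
    funext Y
    rw [hu2d]
  -- the two key integrals
  set A : ℝ := ∫ Y, u Y ^ 2 * θ ‖X - Y‖ with hAdef
  set B : ℝ := ∫ Y, ‖fderiv ℝ u Y‖ ^ 2 * θ ‖X - Y‖ with hBdef
  have hA0 : 0 ≤ A := integral_nonneg fun Y => mul_nonneg (sq_nonneg _) (hθnn _)
  have hB0 : 0 ≤ B := integral_nonneg fun Y => mul_nonneg (sq_nonneg _) (hθnn _)
  -- Cauchy-Schwarz bound on the operator norm of D1
  have hprod : Integrable
      (fun Y => (|u Y| * Real.sqrt (θ ‖X - Y‖)) * (‖fderiv ℝ u Y‖ * Real.sqrt (θ ‖X - Y‖)))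
      volume := by
    apply Integrable.mono' ((hIu X).add (hIdu X))
    · exact ((hu.continuous.abs.aestronglyMeasurable.mul
        ((Real.continuous_sqrt.comp hθcont).aestronglyMeasurable)).mul
        (((measurable_fderiv ℝ u).norm.aestronglyMeasurable).mul
        ((Real.continuous_sqrt.comp hθcont).aestronglyMeasurable)))
    · filter_upwards with Y
      have hs : Real.sqrt (θ ‖X - Y‖) * Real.sqrt (θ ‖X - Y‖) = θ ‖X - Y‖ :=
        Real.mul_self_sqrt (hθnn _)
      rw [Real.norm_eq_abs, abs_of_nonneg (by positivity)]
      have he : |u Y| * Real.sqrt (θ ‖X - Y‖) * (‖fderiv ℝ u Y‖ * Real.sqrt (θ ‖X - Y‖))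
          = |u Y| * ‖fderiv ℝ u Y‖ * θ ‖X - Y‖ := by
        rw [show |u Y| * Real.sqrt (θ ‖X - Y‖) * (‖fderiv ℝ u Y‖ * Real.sqrt (θ ‖X - Y‖))
            = |u Y| * ‖fderiv ℝ u Y‖ * (Real.sqrt (θ ‖X - Y‖) * Real.sqrt (θ ‖X - Y‖)) from by ring,
          hs]
      simp only [Pi.add_apply]
      rw [he]
      nlinarith [mul_nonneg (sq_nonneg (|u Y| - ‖fderiv ℝ u Y‖)) (hθnn ‖X - Y‖),
        sq_abs (u Y), hθnn ‖X - Y‖]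
  have hf2 : Integrable (fun Y => (|u Y| * Real.sqrt (θ ‖X - Y‖)) ^ 2) volume := by
    apply (hIu X).congr
    filter_upwards with Y
    rw [mul_pow, sq_abs, Real.sq_sqrt (hθnn _)]
  have hg2 : Integrable (fun Y => (‖fderiv ℝ u Y‖ * Real.sqrt (θ ‖X - Y‖)) ^ 2) volume := by
    apply (hIdu X).congr
    filter_upwards with Y
    rw [mul_pow, Real.sq_sqrt (hθnn _)]
  have hcs := cs_integral hf2 hg2 hprod
  have hintf2 : (∫ Y, (|u Y| * Real.sqrt (θ ‖X - Y‖)) ^ 2) = A := by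
    rw [hAdef]
    apply integral_congr_ae
    filter_upwards with Y
    rw [mul_pow, sq_abs, Real.sq_sqrt (hθnn _)]
  have hintg2 : (∫ Y, (‖fderiv ℝ u Y‖ * Real.sqrt (θ ‖X - Y‖)) ^ 2) = B := by
    rw [hBdef]
    apply integral_congr_ae
    filter_upwards with Y
    rw [mul_pow, Real.sq_sqrt (hθnn _)]
  rw [hintf2, hintg2] at hcs
  have hPnn : 0 ≤ ∫ Y, (|u Y| * Real.sqrt (θ ‖X - Y‖)) * (‖fderiv ℝ u Y‖ * Real.sqrt (θ ‖X - Y‖)) :=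
    integral_nonneg fun Y => by positivity
  have hPle : (∫ Y, (|u Y| * Real.sqrt (θ ‖X - Y‖)) * (‖fderiv ℝ u Y‖ * Real.sqrt (θ ‖X - Y‖)))
      ≤ Real.sqrt A * Real.sqrt B := by
    rw [← Real.sqrt_mul hA0]
    rw [show (∫ Y, (|u Y| * Real.sqrt (θ ‖X - Y‖)) * (‖fderiv ℝ u Y‖ * Real.sqrt (θ ‖X - Y‖)))
        = Real.sqrt ((∫ Y, (|u Y| * Real.sqrt (θ ‖X - Y‖)) * (‖fderiv ℝ u Y‖ * Real.sqrt (θ ‖X - Y‖))) ^ 2)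
      from (Real.sqrt_sq hPnn).symm]
    exact Real.sqrt_le_sqrt hcs
  have hD1norm : ‖D1‖ ≤ 2 * (Real.sqrt A * Real.sqrt B) := by
    apply ContinuousLinearMap.opNorm_le_bound _ (by positivity)
    intro w
    rw [key w]
    have lhs_int : Integrable (fun Y => 2 * (u Y * fderiv ℝ u Y w) * θ ‖X - Y‖) volume := by
      apply ((hImix X w).const_mul 2).congr
      filter_upwards with Y
      ring
    calc ‖∫ Y, 2 * (u Y * fderiv ℝ u Y w) * θ ‖X - Y‖‖
        ≤ ∫ Y, ‖2 * (u Y * fderiv ℝ u Y w) * θ ‖X - Y‖‖ := norm_integral_le_integral_norm _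
      _ ≤ ∫ Y, (2 * ‖w‖) *
            ((|u Y| * Real.sqrt (θ ‖X - Y‖)) * (‖fderiv ℝ u Y‖ * Real.sqrt (θ ‖X - Y‖))) := by
          apply integral_mono lhs_int.norm (hprod.const_mul (2 * ‖w‖))
          intro Y
          beta_reduce
          have h3 : |fderiv ℝ u Y w| ≤ ‖fderiv ℝ u Y‖ * ‖w‖ := by
            have := (fderiv ℝ u Y).le_opNorm w
            rwa [Real.norm_eq_abs] at this
          have hs : Real.sqrt (θ ‖X - Y‖) * Real.sqrt (θ ‖X - Y‖) = θ ‖X - Y‖ :=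
            Real.mul_self_sqrt (hθnn _)
          rw [Real.norm_eq_abs, abs_mul, abs_mul, abs_two, abs_mul, abs_of_nonneg (hθnn _)]
          have he2 : 2 * ‖w‖ * (|u Y| * Real.sqrt (θ ‖X - Y‖) * (‖fderiv ℝ u Y‖ * Real.sqrt (θ ‖X - Y‖)))
              = 2 * ‖w‖ * (|u Y| * ‖fderiv ℝ u Y‖) * θ ‖X - Y‖ := by
            rw [show |u Y| * Real.sqrt (θ ‖X - Y‖) * (‖fderiv ℝ u Y‖ * Real.sqrt (θ ‖X - Y‖))
                = |u Y| * ‖fderiv ℝ u Y‖ * (Real.sqrt (θ ‖X - Y‖) * Real.sqrt (θ ‖X - Y‖)) from by ring,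
              hs]
            ring
          rw [he2]
          have h7 : 2 * (|u Y| * |(fderiv ℝ u Y) w|) ≤ 2 * ‖w‖ * (|u Y| * ‖fderiv ℝ u Y‖) := by
            nlinarith [h3, abs_nonneg (u Y), norm_nonneg (fderiv ℝ u Y), norm_nonneg w,
              mul_le_mul_of_nonneg_left h3 (abs_nonneg (u Y))]
          exact mul_le_mul_of_nonneg_right h7 (hθnn _)
      _ = (2 * ‖w‖) * ∫ Y, (|u Y| * Real.sqrt (θ ‖X - Y‖)) * (‖fderiv ℝ u Y‖ * Real.sqrt (θ ‖X - Y‖)) :=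
          integral_const_mul _ _
      _ ≤ (2 * ‖w‖) * (Real.sqrt A * Real.sqrt B) :=
          mul_le_mul_of_nonneg_left hPle (by positivity)
      _ = 2 * (Real.sqrt A * Real.sqrt B) * ‖w‖ := by ring
  -- assemble the derivative of ρε
  have hpos : 0 < A + ε := by linarith
  have hsqrtpos : 0 < Real.sqrt (A + ε) := Real.sqrt_pos.mpr hpos
  refine ⟨(1 / (2 * Real.sqrt (A + ε))) • D1, ?_, ?_⟩
  · have hfun : ρε = fun x => Real.sqrt ((∫ Y, u Y ^ 2 * θ ‖x - Y‖) + ε) := funext hρε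
    rw [hfun]
    have hsq : HasDerivAt Real.sqrt (1 / (2 * Real.sqrt (A + ε))) (A + ε) :=
      Real.hasDerivAt_sqrt (ne_of_gt hpos)
    have hGe : HasFDerivAt (fun x => (∫ Y, u Y ^ 2 * θ ‖x - Y‖) + ε) D1 X := hG.add_const ε
    have hc := hsq.comp_hasFDerivAt X hGe
    exact hc
  · have hnorm : ‖(1 / (2 * Real.sqrt (A + ε))) • D1‖
        ≤ Real.sqrt A * Real.sqrt B / Real.sqrt (A + ε) := by
      refine le_trans (ContinuousLinearMap.opNorm_smul_le (1 / (2 * Real.sqrt (A + ε))) D1) ?_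
      rw [Real.norm_eq_abs, abs_of_pos (by positivity)]
      calc 1 / (2 * Real.sqrt (A + ε)) * ‖D1‖
          ≤ 1 / (2 * Real.sqrt (A + ε)) * (2 * (Real.sqrt A * Real.sqrt B)) :=
            mul_le_mul_of_nonneg_left hD1norm (by positivity)
        _ = Real.sqrt A * Real.sqrt B / Real.sqrt (A + ε) := by
            field_simp
    have hsq2 : ‖(1 / (2 * Real.sqrt (A + ε))) • D1‖ ^ 2
        ≤ (Real.sqrt A * Real.sqrt B / Real.sqrt (A + ε)) ^ 2 :=
      pow_le_pow_left₀ (norm_nonneg _) hnorm 2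
    have hc2 : (Real.sqrt A * Real.sqrt B / Real.sqrt (A + ε)) ^ 2 = A * B / (A + ε) := by
      rw [div_pow, mul_pow, Real.sq_sqrt hA0, Real.sq_sqrt hB0, Real.sq_sqrt hpos.le]
    have hfinal : A * B / (A + ε) ≤ B := by
      rw [div_le_iff₀ hpos]
      nlinarith [hB0, hA0, hε]
    calc ‖(1 / (2 * Real.sqrt (A + ε))) • D1‖ ^ 2
        ≤ A * B / (A + ε) := by rw [← hc2]; exact hsq2
      _ ≤ B := hfinal
end
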